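/- arXiv:2311.14346 — 2 statements merged into one kernel-verified Lean document; each statement's English description precedes it below -/
import Mathlib

section
/- Let R be a commutative ring and S a countable multiplicative subset of R. Then the localization R[S^{-1}] has projective dimension at most 1 as an R-module. -/
universe u v

/-- `HasProjDimLE R n M` means the `R`-module `M` has projective dimension at most `n`:
for `n = 0` it means `M` is projective, and for `n+1` it means the kernel of the canonical
surjection from the free module on `M` has projective dimension at most `n`. -/
def HasProjDimLE (R : Type u) [CommRing R] :
    ℕ → (M : Type (max u v)) → [AddCommGroup M] → [Module R M] → Prop
  | 0, M, _, _ => Module.Projective R M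
  | (n+1), M, _, _ =>
      HasProjDimLE R n ↥(LinearMap.ker (Finsupp.linearCombination R (id : M → M)))

/-- `HasFlatDimLE R n M` means the `R`-module `M` has flat dimension at most `n`:
for `n = 0` it means `M` is flat, and for `n+1` it means the kernel of the canonical
surjection from the free module on `M` has flat dimension at most `n`. -/
def HasFlatDimLE (R : Type u) [CommRing R] :
    ℕ → (M : Type (max u v)) → [AddCommGroup M] → [Module R M] → Prop
  | 0, M, _, _ => Module.Flat R M
  | (n+1), M, _, _ =>
      HasFlatDimLE R n ↥(LinearMap.ker (Finsupp.linearCombination R (id : M → M)))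


section Schanuel

variable {R : Type*} [CommRing R]

/-- A split extension of projective modules is projective. -/
theorem projective_of_split_surj {X P : Type*} [AddCommGroup X] [Module R X]
    [AddCommGroup P] [Module R P] (π : X →ₗ[R] P) (σ : P →ₗ[R] X)
    (hσ : ∀ a, π (σ a) = a) [Module.Projective R P]
    (hker : Module.Projective R (LinearMap.ker π)) : Module.Projective R X := by
  let e : X ≃ₗ[R] ((LinearMap.ker π) × P) :=
    { toFun := fun x => (⟨x - σ (π x), by simp [LinearMap.mem_ker, hσ]⟩, π x)
      map_add' := by
        intro x y
        ext
        · simp; abel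
        · simp
      map_smul' := by
        intro c x
        ext
        · simp [smul_sub]
        · simp
      invFun := fun kp => (kp.1 : X) + σ kp.2
      left_inv := by intro x; simp
      right_inv := by
        rintro ⟨⟨k, hk⟩, a⟩
        have hk' : π k = 0 := hk
        ext
        · simp [hk', hσ]
        · simp [hk', hσ] }
  exact Module.Projective.of_equiv e.symm

/-- The kernel of a surjection from a projective module onto a projective module
is projective. -/
theorem projective_ker_of_surj {X Q : Type*} [AddCommGroup X] [Module R X]
    [AddCommGroup Q] [Module R Q] [Module.Projective R X] [Module.Projective R Q]
    (π : X →ₗ[R] Q) (hπ : Function.Surjective π) :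
    Module.Projective R (LinearMap.ker π) := by
  obtain ⟨τ, hτ⟩ := Module.projective_lifting_property π LinearMap.id hπ
  have hτ' : ∀ q, π (τ q) = q := fun q => by
    have := congrArg (fun h => h q) (congrArg DFunLike.coe hτ); simpa using this
  refine Module.Projective.of_split (LinearMap.ker π).subtype
    (LinearMap.codRestrict _ (LinearMap.id - τ.comp π) ?_) ?_
  · intro x; simp [hτ']
  · ext x; rcases x with ⟨x, hx⟩
    have hx' : π x = 0 := hx
    simp [hx']

/-- Schanuel's lemma (the form we need): if `p : P → M` and `q : Q → M` are surjections
from projective modules and `ker q` is projective, then `ker p` is projective. -/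
theorem schanuel_ker_projective {P Q M : Type*}
    [AddCommGroup P] [Module R P] [AddCommGroup Q] [Module R Q]
    [AddCommGroup M] [Module R M] [Module.Projective R P] [Module.Projective R Q]
    (p : P →ₗ[R] M) (hp : Function.Surjective p)
    (q : Q →ₗ[R] M) (hq : Function.Surjective q)
    (hkq : Module.Projective R (LinearMap.ker q)) :
    Module.Projective R (LinearMap.ker p) := by
  set d : (P × Q) →ₗ[R] M := p.comp (LinearMap.fst R P Q) - q.comp (LinearMap.snd R P Q) with hd
  set X := LinearMap.ker d with hX
  have memX : ∀ z : P × Q, z ∈ X ↔ p z.1 = q z.2 := by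
    intro z
    simp [hX, hd, LinearMap.mem_ker, sub_eq_zero]
  let π₁ : X →ₗ[R] P := (LinearMap.fst R P Q).comp X.subtype
  let π₂ : X →ₗ[R] Q := (LinearMap.snd R P Q).comp X.subtype
  have hπ₁ : Function.Surjective π₁ := by
    intro a
    obtain ⟨b, hb⟩ := hq (p a)
    exact ⟨⟨(a, b), (memX _).2 hb.symm⟩, rfl⟩
  have hπ₂ : Function.Surjective π₂ := by
    intro b
    obtain ⟨a, ha⟩ := hp (q b)
    exact ⟨⟨(a, b), (memX _).2 ha⟩, rfl⟩
  have e₁ : (LinearMap.ker π₁) ≃ₗ[R] (LinearMap.ker q) :=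
    { toFun := fun x => ⟨(x : X).1.2, by
        have h1 : ((x : X) : P × Q).1 = 0 := x.2
        have h2 := (memX ((x : X) : P × Q)).1 (x : X).2
        rw [h1, map_zero] at h2
        exact h2.symm⟩
      map_add' := by intros; rfl
      map_smul' := by intros; rfl
      invFun := fun b => ⟨⟨((0 : P), (b : Q)), (memX _).2 (by simp [b.2])⟩, by
        simp [LinearMap.mem_ker, π₁]⟩
      left_inv := by
        rintro ⟨⟨⟨a, b⟩, hab⟩, h⟩
        have h1 : a = 0 := h
        ext <;> simp [h1]
      right_inv := by rintro ⟨b, hb⟩; rfl }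
  have e₂ : (LinearMap.ker π₂) ≃ₗ[R] (LinearMap.ker p) :=
    { toFun := fun x => ⟨(x : X).1.1, by
        have h1 : ((x : X) : P × Q).2 = 0 := x.2
        have h2 := (memX ((x : X) : P × Q)).1 (x : X).2
        rw [h1, map_zero] at h2
        exact h2⟩
      map_add' := by intros; rfl
      map_smul' := by intros; rfl
      invFun := fun a => ⟨⟨((a : P), (0 : Q)), (memX _).2 (by simp [a.2])⟩, by
        simp [LinearMap.mem_ker, π₂]⟩
      left_inv := by
        rintro ⟨⟨⟨a, b⟩, hab⟩, h⟩
        have h1 : b = 0 := h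
        ext <;> simp [h1]
      right_inv := by rintro ⟨a, ha⟩; rfl }
  have hkπ₁ : Module.Projective R (LinearMap.ker π₁) := Module.Projective.of_equiv e₁.symm
  have hXproj : Module.Projective R X := by
    obtain ⟨σ, hσ⟩ := Module.projective_lifting_property π₁ LinearMap.id hπ₁
    have hσ' : ∀ a, π₁ (σ a) = a := fun a => by
      have := congrArg (fun h => h a) (congrArg DFunLike.coe hσ); simpa using this
    exact projective_of_split_surj π₁ σ hσ' hkπ₁
  have := projective_ker_of_surj π₂ hπ₂
  exact Module.Projective.of_equiv e₂

end Schanuel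



section LocSeq

variable {R : Type u} [CommRing R] {S : Submonoid R}

/-- Partial products of an enumeration of `S`. -/
def locT (s : ℕ → S) : ℕ → S
  | 0 => s 0
  | n + 1 => locT s n * s (n + 1)

/-- The "partial numerator" sequence attached to a finitely supported `x`. -/
def locY (s : ℕ → S) (x : ℕ →₀ R) : ℕ → R
  | 0 => x 0
  | n + 1 => x (n + 1) + (s (n + 1) : R) * locY s x n

theorem locY_congr (s : ℕ → S) {x₁ x₂ : ℕ →₀ R} :
    ∀ n, (∀ m, m ≤ n → x₁ m = x₂ m) → locY s x₁ n = locY s x₂ n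
  | 0, h => h 0 le_rfl
  | n + 1, h => by
    simp only [locY, h (n+1) le_rfl, locY_congr s n (fun m hm => h m (hm.trans (Nat.le_succ n)))]

/-- `s k` divides `locT s n` for `k ≤ n`. -/
theorem locT_dvd (s : ℕ → S) : ∀ k n : ℕ, k ≤ n → ∃ v : R, (locT s n : R) = (s k : R) * v := by
  intro k n
  induction n with
  | zero => intro hk; interval_cases k; exact ⟨1, (mul_one _).symm⟩
  | succ n ih =>
    intro hk
    rcases Nat.lt_or_ge k (n+1) with h | h
    · obtain ⟨v, hv⟩ := ih (Nat.lt_succ_iff.1 h)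
      exact ⟨v * (s (n+1) : R), by simp [locT, hv]; ring⟩
    · have : k = n + 1 := le_antisymm hk h
      subst this
      exact ⟨(locT s n : R), by simp [locT]; ring⟩

end LocSeq

section LocSeq2

variable {R : Type u} [CommRing R] {S : Submonoid R}

/-- The telescope surjection `(ℕ →₀ R) → Localization S`. -/
noncomputable def locG (s : ℕ → S) : (ℕ →₀ R) →ₗ[R] Localization S :=
  Finsupp.linearCombination R (fun n => Localization.mk 1 (locT s n))

/-- The shift map. -/
noncomputable def locB (s : ℕ → S) : (ℕ →₀ R) →ₗ[R] (ℕ →₀ R) :=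
  Finsupp.linearCombination R (fun n => Finsupp.single (n + 1) ((s (n + 1) : R)))

/-- The telescope relations map. -/
noncomputable def locF (s : ℕ → S) : (ℕ →₀ R) →ₗ[R] (ℕ →₀ R) := LinearMap.id - locB s

theorem locG_single (s : ℕ → S) (n : ℕ) (c : R) :
    locG s (Finsupp.single n c) = Localization.mk c (locT s n) := by
  simp [locG, Finsupp.linearCombination_single, Localization.smul_mk]

theorem locF_single (s : ℕ → S) (n : ℕ) (c : R) :
    locF s (Finsupp.single n c) =
      Finsupp.single n c - Finsupp.single (n + 1) (c * (s (n + 1) : R)) := by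
  simp [locF, locB, Finsupp.linearCombination_single, Finsupp.smul_single', LinearMap.sub_apply]

theorem mk_step (s : ℕ → S) (a : R) (n : ℕ) :
    Localization.mk a (locT s n) = Localization.mk ((s (n + 1) : R) * a) (locT s (n + 1)) := by
  rw [Localization.mk_eq_mk_iff]
  apply Localization.r_of_eq
  show ((locT s (n + 1) : R)) * a = (locT s n : R) * ((s (n + 1) : R) * a)
  have : locT s (n + 1) = locT s n * s (n + 1) := rfl
  rw [this]
  push_cast
  ring

theorem locB_apply_zero (s : ℕ → S) (z : ℕ →₀ R) : (locB s z) 0 = 0 := by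
  rw [locB, Finsupp.linearCombination_apply, Finsupp.sum_apply]
  apply Finset.sum_eq_zero
  intro n _
  simp [Finsupp.smul_single', Finsupp.single_apply]

theorem locB_apply_succ (s : ℕ → S) (z : ℕ →₀ R) (m : ℕ) :
    (locB s z) (m + 1) = z m * (s (m + 1) : R) := by
  rw [locB, Finsupp.linearCombination_apply, Finsupp.sum_apply, Finsupp.sum]
  rw [Finset.sum_eq_single m]
  · simp [Finsupp.smul_single', Finsupp.single_apply]
  · intro n _ hn
    simp [Finsupp.smul_single', Finsupp.single_apply, hn]
  · intro hm
    simp [Finsupp.notMem_support_iff.1 hm]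

theorem locF_injective (s : ℕ → S) : Function.Injective (locF s) := by
  rw [← LinearMap.ker_eq_bot, LinearMap.ker_eq_bot']
  intro z hz
  have hz' : ∀ m, z m = (locB s z) m := by
    intro m
    have : z m - (locB s z) m = 0 := by
      have := congrArg (fun w : ℕ →₀ R => w m) hz
      simpa [locF, LinearMap.sub_apply, Finsupp.sub_apply] using this
    exact sub_eq_zero.1 this
  have hzero : ∀ m, z m = 0 := by
    intro m
    induction m with
    | zero => rw [hz' 0, locB_apply_zero]
    | succ n ih => rw [hz' (n+1), locB_apply_succ, ih, zero_mul]
  ext m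
  exact hzero m

end LocSeq2

section LocSeq3

variable {R : Type u} [CommRing R] {S : Submonoid R}

theorem eq_single_of_bound (x : ℕ →₀ R) (h : ∀ n, 0 < n → x n = 0) :
    x = Finsupp.single 0 (x 0) := by
  ext n
  cases n with
  | zero => simp
  | succ n => simp [h (n+1) (Nat.succ_pos n), Finsupp.single_apply]

theorem locD (s : ℕ → S) : ∀ (N : ℕ) (x : ℕ →₀ R), (∀ n, N < n → x n = 0) →
    x - Finsupp.single N (locY s x N) ∈ LinearMap.range (locF s) := by
  intro N
  induction N with
  | zero =>
    intro x hx
    have h1 : x - Finsupp.single 0 (locY s x 0) = 0 := by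
      have : locY s x 0 = x 0 := rfl
      rw [this, ← eq_single_of_bound x hx, sub_self]
    rw [h1]
    exact Submodule.zero_mem _
  | succ N ih =>
    intro x hx
    set x' := x - Finsupp.single (N+1) (x (N+1)) with hx'def
    have hx' : ∀ n, N < n → x' n = 0 := by
      intro n hn
      rcases eq_or_ne n (N+1) with rfl | hne
      · simp [hx'def]
      · have hlt : N + 1 < n := lt_of_le_of_ne hn (Ne.symm hne)
        simp [hx'def, Finsupp.sub_apply, Finsupp.single_apply, Ne.symm hne, hx n hlt]
    have hyy : locY s x' N = locY s x N := by
      apply locY_congr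
      intro m hm
      have hne : (N+1) ≠ m := by omega
      simp [hx'def, Finsupp.sub_apply, Finsupp.single_apply, hne]
    obtain ⟨z, hz⟩ := ih x' hx'
    rw [hyy] at hz
    refine ⟨z + Finsupp.single N (locY s x N), ?_⟩
    rw [map_add, hz, locF_single]
    have hsplit : Finsupp.single (N+1) (locY s x (N+1)) =
        Finsupp.single (N+1) (x (N+1)) +
          Finsupp.single (N+1) (locY s x N * (s (N+1) : R)) := by
      rw [← Finsupp.single_add]
      congr 1
      have : locY s x (N+1) = x (N+1) + (s (N+1) : R) * locY s x N := rfl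
      rw [this]; ring
    rw [hsplit, hx'def]
    abel

theorem locG_eq (s : ℕ → S) : ∀ (N : ℕ) (x : ℕ →₀ R), (∀ n, N < n → x n = 0) →
    locG s x = Localization.mk (locY s x N) (locT s N) := by
  intro N
  induction N with
  | zero =>
    intro x hx
    rw [show locY s x 0 = x 0 from rfl, eq_single_of_bound x hx, locG_single]
    simp
  | succ N ih =>
    intro x hx
    set x' := x - Finsupp.single (N+1) (x (N+1)) with hx'def
    have hx' : ∀ n, N < n → x' n = 0 := by
      intro n hn
      rcases eq_or_ne n (N+1) with rfl | hne
      · simp [hx'def]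
      · have hlt : N + 1 < n := lt_of_le_of_ne hn (Ne.symm hne)
        simp [hx'def, Finsupp.sub_apply, Finsupp.single_apply, Ne.symm hne, hx n hlt]
    have hyy : locY s x' N = locY s x N := by
      apply locY_congr
      intro m hm
      have hne : (N+1) ≠ m := by omega
      simp [hx'def, Finsupp.sub_apply, Finsupp.single_apply, hne]
    have hxeq : x = x' + Finsupp.single (N+1) (x (N+1)) := by
      rw [hx'def]; abel
    calc locG s x = locG s x' + locG s (Finsupp.single (N+1) (x (N+1))) := by
          rw [← map_add, ← hxeq]
      _ = Localization.mk (locY s x N) (locT s N)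
            + Localization.mk (x (N+1)) (locT s (N+1)) := by
          rw [ih x' hx', hyy, locG_single]
      _ = Localization.mk ((s (N+1) : R) * locY s x N + x (N+1)) (locT s (N+1)) := by
          rw [mk_step s _ N, Localization.add_mk_self]
      _ = Localization.mk (locY s x (N+1)) (locT s (N+1)) := by
          congr 1
          have : locY s x (N+1) = x (N+1) + (s (N+1) : R) * locY s x N := rfl
          rw [this]; ring

theorem locKer_le_range (s : ℕ → S) (hs : ∀ (c : S) (N : ℕ), ∃ k, N < k ∧ s k = c) :
    LinearMap.ker (locG s) ≤ LinearMap.range (locF s) := by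
  intro x hx
  set N := x.support.sup id with hN
  have hbound : ∀ n, N < n → x n = 0 := by
    intro n hn
    by_contra h
    have := Finset.le_sup (f := id) (Finsupp.mem_support_iff.2 h)
    simp only [id] at this
    omega
  have hg : Localization.mk (locY s x N) (locT s N) = 0 := by
    rw [← locG_eq s N x hbound]
    exact hx
  rw [Localization.mk_eq_mk', IsLocalization.mk'_eq_zero_iff] at hg
  obtain ⟨c, hc⟩ := hg
  obtain ⟨k, hk, hsk⟩ := hs c N
  have hprop : ∀ m, N ≤ m → (c : R) * locY s x m = 0 := by
    intro m hm
    induction m with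
    | zero =>
      have : N = 0 := Nat.le_zero.1 hm
      rw [← this]; exact hc
    | succ n ihn =>
      rcases Nat.lt_or_ge N (n+1) with h | h
      · have hn : N ≤ n := Nat.lt_succ_iff.1 h
        have : locY s x (n+1) = x (n+1) + (s (n+1) : R) * locY s x n := rfl
        rw [this, hbound (n+1) h, zero_add, mul_left_comm, ihn hn, mul_zero]
      · have : N = n + 1 := le_antisymm hm h
        rw [← this]; exact hc
  have hyk : locY s x k = 0 := by
    obtain ⟨m, rfl⟩ : ∃ m, k = m + 1 := ⟨k - 1, by omega⟩
    have : locY s x (m+1) = x (m+1) + (s (m+1) : R) * locY s x m := rfl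
    rw [this, hbound (m+1) hk, zero_add, hsk, hprop m (by omega)]
  obtain ⟨z, hz⟩ := locD s k x (fun n hn => hbound n (by omega))
  exact ⟨z, by rw [hz, hyk, Finsupp.single_zero, sub_zero]⟩

theorem locG_surjective (s : ℕ → S) (hs : ∀ (c : S) (N : ℕ), ∃ k, N < k ∧ s k = c) :
    Function.Surjective (locG s) := by
  intro z
  induction z using Localization.ind with
  | _ y =>
    obtain ⟨a, u⟩ := y
    obtain ⟨k, -, hsk⟩ := hs u 0
    obtain ⟨v, hv⟩ := locT_dvd s k k le_rfl
    refine ⟨Finsupp.single k (a * v), ?_⟩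
    rw [locG_single, Localization.mk_eq_mk_iff]
    apply Localization.r_of_eq
    show (u : R) * (a * v) = (locT s k : R) * a
    rw [hv, hsk]
    ring

theorem locRange_le_ker (s : ℕ → S) :
    LinearMap.range (locF s) ≤ LinearMap.ker (locG s) := by
  rw [LinearMap.range_le_ker_iff]
  apply Finsupp.lhom_ext
  intro n c
  rw [LinearMap.comp_apply, LinearMap.zero_apply, locF_single, map_sub, locG_single,
    locG_single, mk_step s c n, sub_eq_zero]
  congr 1
  ring

theorem loc_resolution (S : Submonoid R) (s : ℕ → S)
    (hs : ∀ (c : S) (N : ℕ), ∃ k, N < k ∧ s k = c) :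
    Function.Surjective (locG (R := R) s) ∧
      Module.Projective R (LinearMap.ker (locG (R := R) s)) := by
  refine ⟨locG_surjective s hs, ?_⟩
  have hker : LinearMap.ker (locG s) = LinearMap.range (locF s) :=
    le_antisymm (locKer_le_range s hs) (locRange_le_ker s)
  exact Module.Projective.of_equiv
    ((LinearEquiv.ofInjective (locF s) (locF_injective s)).trans
      (LinearEquiv.ofEq _ _ hker.symm))

end LocSeq3

/-- If `S` is a countable multiplicative subset of a commutative ring `R`, then the
localization `R[S⁻¹]` has projective dimension at most `1` as an `R`-module. -/
theorem projDim_localization_le_one (R : Type u) [CommRing R] (S : Submonoid R)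
    (hS : Countable S) :
    HasProjDimLE R 1 (Localization S) := by
  haveI : Nonempty S := ⟨1⟩
  obtain ⟨f0, hf0⟩ := exists_surjective_nat S
  set s : ℕ → S := fun n => f0 (Nat.unpair n).1 with hsdef
  have hs : ∀ (c : S) (N : ℕ), ∃ k, N < k ∧ s k = c := by
    intro c N
    obtain ⟨m, hm⟩ := hf0 c
    refine ⟨Nat.pair m (N+1), ?_, ?_⟩
    · have := Nat.right_le_pair m (N+1)
      omega
    · simp [hsdef, Nat.unpair_pair, hm]
  obtain ⟨hsurj, hker⟩ := loc_resolution S s hs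
  show Module.Projective R
    (LinearMap.ker (Finsupp.linearCombination R (id : Localization S → Localization S)))
  exact schanuel_ker_projective _ (Finsupp.linearCombination_id_surjective R _)
    (locG s) hsurj hker
end

section
/- Let R be a commutative noetherian ring satisfying condition (C_2), and let Q be the classical ring of quotients of R (the localization of R at the set of non-zero-divisors). Then the Krull dimension of Q is at most 1. -/
/-! Auxiliary lemmas -/

open Submodule in
lemma assPrimes_subset_union {R M : Type*} [CommRing R] [IsNoetherianRing R] [AddCommGroup M]
    [Module R M]
    (N : Submodule R M) :
    associatedPrimes R M ⊆ associatedPrimes R N ∪ associatedPrimes R (M ⧸ N) := by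
  intro p hpa
  obtain ⟨hp, x, hx⟩ := isAssociatedPrime_iff.mp hpa
  by_cases h : ∀ a : R, a • x ∈ N → a • x = 0
  · right
    refine isAssociatedPrime_iff.mpr ⟨hp, N.mkQ x, ?_⟩
    ext r
    rw [hx, Submodule.mem_colon_singleton, Submodule.mem_bot,
      Submodule.mem_colon_singleton, Submodule.mem_bot]
    constructor
    · intro hr
      rw [← map_smul, hr, map_zero]
    · intro hr
      have : r • x ∈ N := by
        rwa [← Submodule.Quotient.mk_eq_zero, ← N.mkQ_apply, map_smul]
      exact h r this
  · push_neg at h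
    obtain ⟨a, haN, ha0⟩ := h
    left
    have haP : a ∉ p := by
      rw [hx, Submodule.mem_colon_singleton, Submodule.mem_bot]
      exact ha0
    refine isAssociatedPrime_iff.mpr ⟨hp, ⟨a • x, haN⟩, ?_⟩
    ext r
    rw [Submodule.mem_colon_singleton, Submodule.mem_bot]
    have hco : (r • (⟨a • x, haN⟩ : N) = 0) ↔ r • (a • x) = 0 := by
      rw [← Subtype.coe_inj]; simp
    rw [hco, smul_smul]
    constructor
    · intro hr
      rw [mul_comm]
      rw [hx, Submodule.mem_colon_singleton, Submodule.mem_bot] at hr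
      rw [mul_smul, hr, smul_zero]
    · intro hr
      have : r * a ∈ p := by
        rw [hx, Submodule.mem_colon_singleton, Submodule.mem_bot]; exact hr
      rcases hp.mem_or_mem this with h' | h'
      · exact h'
      · exact absurd h' haP

open Submodule in
lemma finite_associatedPrimes_quot {R M : Type*} [CommRing R] [IsNoetherianRing R]
    [AddCommGroup M] [Module R M] [IsNoetherian R M] (N : Submodule R M) :
    (associatedPrimes R (M ⧸ N)).Finite := by
  have wf : WellFounded ((· > ·) : Submodule R M → Submodule R M → Prop) :=
    (inferInstance : WellFoundedGT (Submodule R M)).wf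
  induction N using WellFounded.induction wf with
  | _ N IH =>
  by_cases hN : N = ⊤
  · subst hN
    have : Subsingleton (M ⧸ (⊤ : Submodule R M)) :=
      Submodule.Quotient.subsingleton_iff.mpr rfl
    rw [associatedPrimes.eq_empty_of_subsingleton]
    exact Set.finite_empty
  · have : Nontrivial (M ⧸ N) :=
      Submodule.Quotient.nontrivial_iff.mpr hN
    obtain ⟨p, hpa⟩ := associatedPrimes.nonempty R (M ⧸ N)
    obtain ⟨hp, xb, hxb⟩ := isAssociatedPrime_iff.mp hpa
    have hxb0 : xb ≠ 0 := by
      rintro rfl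
      apply hp.ne_top
      rw [hxb, eq_top_iff]
      intro r _
      rw [Submodule.mem_colon_singleton, smul_zero]
      exact Submodule.zero_mem _
    obtain ⟨x, rfl⟩ := N.mkQ_surjective xb
    have hxN : x ∉ N := fun hx => hxb0 ((Submodule.Quotient.mk_eq_zero N).mpr hx)
    set N' : Submodule R M := N ⊔ R ∙ x with hN'
    have hNN' : N < N' := by
      refine lt_of_le_of_ne le_sup_left fun he => hxN ?_
      rw [he]
      exact Submodule.mem_sup_right (Submodule.mem_span_singleton_self x)
    have hfin' : (associatedPrimes R (M ⧸ N')).Finite := IH N' hNN'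
    set S : Submodule R (M ⧸ N) := R ∙ (N.mkQ x) with hS
    have h1 : Submodule.map N.mkQ N = ⊥ := by
      rw [eq_bot_iff]
      rintro y ⟨z, hz, rfl⟩
      simpa [Submodule.Quotient.mk_eq_zero] using hz
    have hmap : Submodule.map N.mkQ N' = S := by
      rw [hN', Submodule.map_sup, h1, Submodule.map_span]
      simp [hS]
    have e2 : ((M ⧸ N) ⧸ S) ≃ₗ[R] M ⧸ N' :=
      hmap ▸ Submodule.quotientQuotientEquivQuotient N N' hNN'.le
    have hker : LinearMap.ker (LinearMap.toSpanSingleton R (M ⧸ N) (N.mkQ x))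
        = (p : Submodule R R) := by
      ext r
      rw [LinearMap.mem_ker, hxb]
      rw [Submodule.mem_colon_singleton, Submodule.mem_bot, LinearMap.toSpanSingleton_apply]
    have ekk : (R ⧸ p) ≃ₗ[R] S := by
      refine ((Submodule.quotEquivOfEq _ _ hker.symm).trans
        ((LinearMap.toSpanSingleton R (M ⧸ N) (N.mkQ x)).quotKerEquivRange)).trans
        (LinearEquiv.ofEq _ _ ?_)
      exact (LinearMap.span_singleton_eq_range R _ _).symm
    have hassS : associatedPrimes R S = {p} := by
      rw [← LinearEquiv.AssociatedPrimes.eq ekk,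
        associatedPrimes.eq_singleton_of_isPrimary hp.isPrimary, hp.radical]
    have hsub := assPrimes_subset_union S
    rw [hassS, LinearEquiv.AssociatedPrimes.eq e2] at hsub
    exact ((Set.finite_singleton p).union hfin').subset hsub

lemma exists_associated_ge {R : Type*} [CommRing R] [IsNoetherianRing R]
    (p : Ideal R) (hzd : ∀ r ∈ p, ∃ x : R, x ≠ 0 ∧ r * x = 0) :
    ∃ q ∈ associatedPrimes R R, p ≤ q := by
  have hfin : (associatedPrimes R R).Finite := by
    have := finite_associatedPrimes_quot (R := R) (M := R) ⊥
    rwa [LinearEquiv.AssociatedPrimes.eq (Submodule.quotEquivOfEqBot ⊥ rfl)] at this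
  have hcover : (p : Set R) ⊆
      ⋃ i ∈ (hfin.toFinset : Set (Ideal R)), ((id i : Ideal R) : Set R) := by
    intro r hr
    obtain ⟨x, hx0, hx⟩ := hzd r hr
    have hmem : r ∈ ⋃ q ∈ associatedPrimes R R, (q : Set R) := by
      rw [biUnion_associatedPrimes_eq_zero_divisors]
      exact ⟨x, hx0, by simpa [smul_eq_mul] using hx⟩
    simpa [hfin.coe_toFinset] using hmem
  obtain ⟨q, hq, hle⟩ := (Ideal.subset_union_prime (⊥ : Ideal R) ⊥
    (fun i hi _ _ => ((hfin.mem_toFinset.mp hi).isPrime))).mp hcover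
  exact ⟨q, hfin.mem_toFinset.mp hq, hle⟩

open RingTheory.Sequence in
/-- The depth of a local ring: the supremum of lengths of regular sequences contained in
the maximal ideal. -/
noncomputable def ringDepth (A : Type*) [CommRing A] [IsLocalRing A] : ℕ∞ :=
  sSup {n : ℕ∞ | ∃ rs : List A, (∀ r ∈ rs, r ∈ IsLocalRing.maximalIdeal A) ∧
    IsRegular A rs ∧ (rs.length : ℕ∞) = n}

/-- The height of a prime ideal. -/
noncomputable def primeHeight {R : Type*} [CommRing R] (p : Ideal R) [hp : p.IsPrime] : ℕ∞ :=
  Order.height (⟨p, hp⟩ : PrimeSpectrum R)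

/-- Serre's condition `(S_k)`: for every prime `p`, `depth R_p ≥ min (height p) k`. -/
def SerreS (R : Type*) [CommRing R] (k : ℕ) : Prop :=
  ∀ (p : Ideal R) (_ : p.IsPrime), min (primeHeight p) (k : ℕ∞) ≤ ringDepth (Localization.AtPrime p)

/-- The condition `(C_k)`: for every prime `p`, `depth R_p ≥ min (height p) k - 1`. -/
def SerreC (R : Type*) [CommRing R] (k : ℕ) : Prop :=
  ∀ (p : Ideal R) (_ : p.IsPrime), min (primeHeight p) (k : ℕ∞) - 1 ≤ ringDepth (Localization.AtPrime p)

open RingTheory.Sequence in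
lemma ringDepth_eq_zero_of_associated {R : Type*} [CommRing R]
    (q : Ideal R) [hq : q.IsPrime] (x : R) (hx : q = (Submodule.span R {x}).annihilator)
    (h1 : 1 ≤ ringDepth (Localization.AtPrime q)) : False := by
  set A := Localization.AtPrime q with hA
  obtain ⟨n, hn, hn1⟩ : ∃ n ∈ {n : ℕ∞ | ∃ rs : List A,
      (∀ r ∈ rs, r ∈ IsLocalRing.maximalIdeal A) ∧
      IsRegular A rs ∧ (rs.length : ℕ∞) = n}, 1 ≤ n := by
    by_contra hcon
    push_neg at hcon
    have : ringDepth A ≤ 0 := sSup_le fun n hn => by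
      have h0 : n = 0 := by
        have := hcon n hn
        simpa [ENat.lt_one_iff_eq_zero] using this
      simp [h0]
    exact absurd (h1.trans this) (by simp)
  obtain ⟨rs, hmem, hreg, hlen⟩ := hn
  match rs, hreg with
  | [], _ => simp [← hlen] at hn1
  | r :: rest, hreg =>
    have hsr : IsSMulRegular A r :=
      ((isWeaklyRegular_cons_iff A r rest).mp hreg.toIsWeaklyRegular).1
    have hrm : r ∈ IsLocalRing.maximalIdeal A := hmem r List.mem_cons_self
    set φ := algebraMap R A with hφ
    have hx0 : φ x ≠ 0 := by
      intro h0
      rw [IsLocalization.map_eq_zero_iff q.primeCompl] at h0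
      obtain ⟨⟨m, hmc⟩, hm⟩ := h0
      have : m ∈ q := by
        rw [hx, Submodule.mem_annihilator_span_singleton, smul_eq_mul]
        exact hm
      exact hmc this
    obtain ⟨⟨a, s⟩, hs⟩ := IsLocalization.surj q.primeCompl r
    have haq : a ∈ q := by
      have hmem' : φ a ∈ IsLocalRing.maximalIdeal A := by
        rw [← hs]
        exact Ideal.mul_mem_right _ _ hrm
      exact (IsLocalization.AtPrime.to_map_mem_maximal_iff A q a).mp hmem'
    have hax : a * x = 0 := by
      have : a ∈ (Submodule.span R {x}).annihilator := hx ▸ haq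
      rw [Submodule.mem_annihilator_span_singleton, smul_eq_mul] at this
      exact this
    have hrx : r * φ x = 0 := by
      have hu : IsUnit (φ s) := IsLocalization.map_units A s
      rw [← hu.mul_left_eq_zero]
      calc r * φ x * φ s = (r * φ s) * φ x := by ring
        _ = φ a * φ x := by rw [hs]
        _ = φ (a * x) := by rw [map_mul]
        _ = 0 := by rw [hax, map_zero]
    have hz : r • φ x = r • (0 : A) := by
      rw [smul_eq_mul, smul_zero, hrx]
    exact hx0 (hsr hz)

/-- If a commutative noetherian ring satisfies condition `(C_2)`, then its classical ring
of quotients (the localization at the multiplicative set of regular elements) has Krull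
dimension at most `1`. -/
theorem krullDim_quotientRing_le_one (R : Type*) [CommRing R] [IsNoetherianRing R]
    (hC : SerreC R 2) :
    ringKrullDim (Localization (nonZeroDivisors R)) ≤ 1 := by
  set Q := Localization (nonZeroDivisors R) with hQ
  have key : ∀ l : LTSeries (PrimeSpectrum Q), l.length ≤ 1 := by
    intro l
    by_contra hlen
    push_neg at hlen
    have h2 : 2 ≤ l.length := hlen
    have h01 : l ⟨0, by omega⟩ < l ⟨1, by omega⟩ :=
      l.strictMono (show (⟨0, by omega⟩ : Fin (l.length + 1)) < ⟨1, by omega⟩ by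
        rw [Fin.mk_lt_mk]; omega)
    have h12 : l ⟨1, by omega⟩ < l ⟨2, by omega⟩ :=
      l.strictMono (show (⟨1, by omega⟩ : Fin (l.length + 1)) < ⟨2, by omega⟩ by
        rw [Fin.mk_lt_mk]; omega)
    set e := IsLocalization.orderIsoOfPrime (nonZeroDivisors R) Q with he
    let f : PrimeSpectrum Q → PrimeSpectrum R := fun P =>
      ⟨(e ⟨P.asIdeal, P.isPrime⟩).1, (e ⟨P.asIdeal, P.isPrime⟩).2.1⟩
    have hfmono : StrictMono f := by
      intro a b hab
      rw [← PrimeSpectrum.asIdeal_lt_asIdeal]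
      show (e ⟨a.asIdeal, a.isPrime⟩).1 < (e ⟨b.asIdeal, b.isPrime⟩).1
      exact Subtype.coe_lt_coe.mpr
        (e.lt_iff_lt.mpr (by rwa [Subtype.mk_lt_mk, PrimeSpectrum.asIdeal_lt_asIdeal]))
    set c0 := f (l ⟨0, by omega⟩)
    set c1 := f (l ⟨1, by omega⟩)
    set c2 := f (l ⟨2, by omega⟩)
    have hc01 : c0 < c1 := hfmono h01
    have hc12 : c1 < c2 := hfmono h12
    -- c2 is disjoint from nonZeroDivisors
    have hdisj : Disjoint ((nonZeroDivisors R : Submonoid R) : Set R) (c2.asIdeal : Set R) :=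
      (e ⟨(l ⟨2, by omega⟩).asIdeal, (l ⟨2, by omega⟩).isPrime⟩).2.2
    have hzd : ∀ r ∈ c2.asIdeal, ∃ x : R, x ≠ 0 ∧ r * x = 0 := by
      intro r hr
      have hrn : r ∉ nonZeroDivisors R := fun hrn =>
        Set.disjoint_left.mp hdisj hrn hr
      rw [mem_nonZeroDivisors_iff_right] at hrn
      push_neg at hrn
      obtain ⟨x, hx1, hx2⟩ := hrn
      exact ⟨x, hx2, by rwa [mul_comm]⟩
    obtain ⟨q, hqass, hle⟩ := exists_associated_ge c2.asIdeal hzd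
    haveI hqp : q.IsPrime := hqass.isPrime
    set d : PrimeSpectrum R := ⟨q, hqp⟩ with hd
    -- height of d is at least 2
    have hht : (2 : ℕ∞) ≤ Order.height d := by
      have hc2d : c2 ≤ d := by
        rw [← PrimeSpectrum.asIdeal_le_asIdeal]
        exact hle
      refine le_trans ?_ (Order.height_mono hc2d)
      have := Order.length_le_height_last
        (p := ((RelSeries.singleton {(a, b) : PrimeSpectrum R × PrimeSpectrum R | a < b} c0).snoc c1 (by simpa using hc01)).snoc c2
          (by simpa using hc12))
      simpa using this
    have hdep : (1 : ℕ∞) ≤ ringDepth (Localization.AtPrime q) := by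
      have hCq := hC q hqp
      rw [show primeHeight q = Order.height d from rfl] at hCq
      have hmin : Order.height d ⊓ ((2 : ℕ) : ℕ∞) = ((2 : ℕ) : ℕ∞) :=
        min_eq_right (by exact_mod_cast hht)
      rw [hmin] at hCq
      have h21 : ((2 : ℕ) : ℕ∞) - 1 = 1 := by
        norm_num
        decide
      rwa [h21] at hCq
    obtain ⟨x, hxq0⟩ := (isAssociatedPrime_iff.mp hqass).2
    have hxq : q = (Submodule.span R {x}).annihilator := by
      rw [hxq0]; ext r
      rw [Submodule.mem_colon_singleton, Submodule.mem_bot,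
        Submodule.mem_annihilator_span_singleton]
    exact ringDepth_eq_zero_of_associated q x hxq hdep
  show Order.krullDim (PrimeSpectrum Q) ≤ (1 : WithBot ℕ∞)
  refine iSup_le fun l => ?_
  exact_mod_cast key l
end
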